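/- arXiv:2205.08773 — 2 statements merged into one kernel-verified Lean document; each statement's English description precedes it below -/
import Mathlib

section
/- There is a weaker version: ∑_{n ≤ x} φ(n) = (3/π²)x² + O(x log x) as x → ∞. -/
/-!
Since `φ = μ * id`, we have `∑_{n ≤ x} φ(n) = ½ ∑_{d ≤ x} μ(d) (⌊x/d⌋² + ⌊x/d⌋)`.
Replacing `⌊x/d⌋² + ⌊x/d⌋` by `(x/d)²` costs at most `x/d` in the `d`-th term, hence
`O(x log x)` in total. What remains is `½ x² ∑_{d ≤ x} μ(d)/d²`, and completing this sum to
`∑_d μ(d)/d² = 1/ζ(2) = 6/π²` costs `O(x² · 1/x) = O(x)`.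
-/

open Filter Finset Real
open scoped ArithmeticFunction.Moebius Nat

theorem tsum_moebius_div_sq : ∑' n : ℕ, (μ n : ℝ) / n ^ 2 = 6 / π ^ 2 := by
  have hL : LSeries (fun n ↦ (μ n : ℂ)) 2 = 6 / π ^ 2 := by
    have h := ArithmeticFunction.LSeries_zeta_mul_Lseries_moebius (s := 2) (by norm_num)
    rw [ArithmeticFunction.LSeries_zeta_eq_riemannZeta (by norm_num), riemannZeta_two] at h
    have hπ : (π : ℂ) ≠ 0 := by exact_mod_cast pi_ne_zero
    field_simp
    linear_combination 6 * h
  rw [LSeries_def₀ (by simp)] at hL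
  apply Complex.ofReal_injective
  push_cast [Complex.ofReal_tsum]
  simpa using hL

theorem abs_moebius_div_sq_le (n : ℕ) : |(μ n : ℝ) / n ^ 2| ≤ ((n : ℝ) ^ 2)⁻¹ := by
  rw [abs_div, abs_of_nonneg (by positivity : (0 : ℝ) ≤ n ^ 2), div_eq_mul_inv]
  exact mul_le_of_le_one_left (by positivity)
    (by exact_mod_cast ArithmeticFunction.abs_moebius_le_one)

theorem abs_tsum_sub_sum_Icc_le {f : ℕ → ℝ} (hf : ∀ n, |f n| ≤ ((n : ℝ) ^ 2)⁻¹) (N : ℕ) :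
    |∑' n, f n - ∑ n ∈ Icc 1 N, f n| ≤ 2 / (N + 1) := by
  have hsum : Summable f := .of_norm_bounded ((summable_nat_pow_inv (p := 2)).mpr one_lt_two) hf
  -- `(0 ^ 2)⁻¹ = 0`, so the hypothesis at `n = 0` forces `f 0 = 0`.
  have hf₀ : f 0 = 0 := abs_nonpos_iff.mp (by simpa using hf 0)
  have hpartial (M : ℕ) : ∑ n ∈ range (M + 1), f n = ∑ n ∈ Ioc 0 M, f n := by
    rw [Nat.range_succ_eq_Icc_zero, Icc_eq_cons_Ioc (Nat.zero_le M), sum_cons, hf₀, zero_add]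
  rw [show Icc 1 N = Ioc 0 N from Icc_add_one_left_eq_Ioc 0 N]
  refine le_of_tendsto ((hsum.hasSum.tendsto_sum_nat.comp (tendsto_add_atTop_nat 1)).sub_const
    (∑ n ∈ Ioc 0 N, f n)).abs (eventually_atTop.mpr ⟨N, fun M hM ↦ ?_⟩)
  rw [Function.comp_apply, hpartial, ← sum_Ioc_consecutive _ (Nat.zero_le N) hM,
    add_sub_cancel_left]
  calc |∑ n ∈ Ioc N M, f n| ≤ ∑ n ∈ Ioc N M, ((n : ℝ) ^ 2)⁻¹ :=
        (abs_sum_le_sum_abs _ _).trans (sum_le_sum fun n _ ↦ hf n)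
    _ ≤ ∑ n ∈ Ioo N (M + 1), ((n : ℝ) ^ 2)⁻¹ :=
        sum_le_sum_of_subset_of_nonneg (fun n hn ↦ by simp at hn ⊢; omega)
          (fun _ _ _ ↦ by positivity)
    _ ≤ 2 / (N + 1) := sum_Ioo_inv_sq_le N (M + 1)

theorem sum_Icc_inv_le_one_add_log (N : ℕ) : ∑ d ∈ Icc 1 N, (d : ℝ)⁻¹ ≤ 1 + log N := by
  simpa [harmonic_eq_sum_Icc] using harmonic_le_one_add_log N

theorem sum_Icc_natCast (M : ℕ) : ∑ m ∈ Icc 1 M, (m : ℝ) = ((M : ℝ) ^ 2 + M) / 2 := by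
  induction M with
  | zero => simp
  | succ M ih =>
    rw [sum_Icc_succ_top (by omega), ih]
    push_cast
    ring

theorem abs_floor_sq_add_floor_sub_sq_le {y : ℝ} (hy : 0 ≤ y) :
    |(⌊y⌋₊ : ℝ) ^ 2 + ⌊y⌋₊ - y ^ 2| ≤ y := by
  have h₁ := Nat.floor_le hy
  have h₂ := Nat.lt_floor_add_one y
  rw [abs_le]
  constructor <;> nlinarith

theorem moebius_mul_id_apply_eq_totient {n : ℕ} (hn : 0 < n) :
    ((μ : ArithmeticFunction ℝ) * (ArithmeticFunction.id : ArithmeticFunction ℝ)) n = φ n := by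
  have := (ArithmeticFunction.sum_eq_iff_sum_mul_moebius_eq (R := ℝ) (f := fun d ↦ (φ d : ℝ))
    (g := fun n ↦ n)).mp (fun m _ ↦ by exact_mod_cast Nat.sum_totient m) n hn
  simpa [ArithmeticFunction.mul_apply] using this

theorem sum_Icc_totient (N : ℕ) :
    ∑ n ∈ Icc 1 N, (φ n : ℝ) =
      ∑ d ∈ Icc 1 N, (μ d : ℝ) * (((N / d : ℕ) : ℝ) ^ 2 + (N / d : ℕ)) / 2 := by
  have h := ArithmeticFunction.sum_Ioc_mul_eq_sum_sum (μ : ArithmeticFunction ℝ)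
    ArithmeticFunction.id N
  simp only [← Icc_add_one_left_eq_Ioc, zero_add] at h
  rw [sum_congr rfl fun n hn ↦ (moebius_mul_id_apply_eq_totient (mem_Icc.mp hn).1).symm, h]
  simp [sum_Icc_natCast, mul_div_assoc]

theorem abs_sum_totient_sub_le {x : ℝ} (hx : 0 ≤ x) :
    |∑ n ∈ Icc 1 ⌊x⌋₊, (φ n : ℝ) - x ^ 2 / 2 * ∑ d ∈ Icc 1 ⌊x⌋₊, (μ d : ℝ) / d ^ 2| ≤
      x / 2 * ∑ d ∈ Icc 1 ⌊x⌋₊, (d : ℝ)⁻¹ := by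
  rw [sum_Icc_totient, mul_sum, mul_sum, ← sum_sub_distrib]
  refine (abs_sum_le_sum_abs _ _).trans (sum_le_sum fun d hd ↦ ?_)
  have hd : (0 : ℝ) < d := by exact_mod_cast (mem_Icc.mp hd).1
  have hμ : |(μ d : ℝ)| ≤ 1 := by exact_mod_cast ArithmeticFunction.abs_moebius_le_one
  have hfloor := abs_floor_sq_add_floor_sub_sq_le (div_nonneg hx hd.le)
  rw [← Nat.floor_div_natCast]
  calc _ = |(μ d : ℝ) * ((⌊x / d⌋₊ : ℝ) ^ 2 + ⌊x / d⌋₊ - (x / d) ^ 2) / 2| := by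
        congr 1
        field_simp
    _ = |(μ d : ℝ)| * |(⌊x / d⌋₊ : ℝ) ^ 2 + ⌊x / d⌋₊ - (x / d) ^ 2| / 2 := by
        rw [abs_div, abs_mul, abs_two]
    _ ≤ 1 * (x / d) / 2 := by gcongr
    _ = x / 2 * (d : ℝ)⁻¹ := by ring

theorem abs_sum_totient_sub_le_mul_log {x : ℝ} (hx : 1 ≤ x) :
    |∑ n ∈ Icc 1 ⌊x⌋₊, (φ n : ℝ) - 3 / π ^ 2 * x ^ 2| ≤ x / 2 * (1 + log x) + x := by
  set N := ⌊x⌋₊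
  set P := ∑ d ∈ Icc 1 N, (μ d : ℝ) / d ^ 2
  have hN : (1 : ℝ) ≤ N := by exact_mod_cast Nat.le_floor (by exact_mod_cast hx)
  have hNx : (N : ℝ) ≤ x := Nat.floor_le (by linarith)
  have hxN : x < N + 1 := Nat.lt_floor_add_one x
  have hharmonic : ∑ d ∈ Icc 1 N, (d : ℝ)⁻¹ ≤ 1 + log x := by
    grw [sum_Icc_inv_le_one_add_log N, log_le_log (by linarith) hNx]
  have htail : |6 / π ^ 2 - P| ≤ 2 / ((N : ℝ) + 1) :=
    tsum_moebius_div_sq ▸ abs_tsum_sub_sum_Icc_le abs_moebius_div_sq_le N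
  calc |∑ n ∈ Icc 1 N, (φ n : ℝ) - 3 / π ^ 2 * x ^ 2|
      = |(∑ n ∈ Icc 1 N, (φ n : ℝ) - x ^ 2 / 2 * P) - x ^ 2 / 2 * (6 / π ^ 2 - P)| := by
        ring_nf
    _ ≤ x / 2 * ∑ d ∈ Icc 1 N, (d : ℝ)⁻¹ + x ^ 2 / 2 * (2 / (N + 1)) := by
        grw [abs_sub, abs_sum_totient_sub_le (by linarith), abs_mul, htail,
          abs_of_nonneg (by positivity : 0 ≤ x ^ 2 / 2)]
    _ ≤ x / 2 * (1 + log x) + x := by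
        grw [hharmonic]
        gcongr
        rw [div_mul_div_comm, div_le_iff₀ (by positivity)]
        nlinarith

/-- Weaker version: `∑_{n ≤ x} φ(n) = (3/π²) x² + O(x log x)` as `x → ∞`. -/
theorem sum_totient_asymptotic_weak :
    (fun x : ℝ => (∑ n ∈ Finset.Icc 1 ⌊x⌋₊, (Nat.totient n : ℝ)) - 3 / π ^ 2 * x ^ 2)
    =O[atTop] fun x : ℝ => x * Real.log x := by
  refine Asymptotics.IsBigO.of_bound 2 ?_
  filter_upwards [eventually_ge_atTop (exp 1)] with x hx
  have hx₁ : 1 ≤ x := (one_le_exp zero_le_one).trans hx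
  have hlog : 1 ≤ log x := (le_log_iff_exp_le (by positivity)).mpr hx
  rw [norm_eq_abs, norm_of_nonneg (by positivity)]
  grw [abs_sum_totient_sub_le_mul_log hx₁]
  nlinarith
end

section
/- For 0 < |t| < 1, the function Φ(t) = πt(1−|t|)cot(πt) + |t| satisfies 0 < Φ(t) < 1. -/
/-!
Since `t ↦ t cot (π t)` is even, `Φ` is even and it suffices to take `0 < t < 1`. There
`Φ(t) = t (sin (π t) + π (1 - t) cos (π t)) / sin (π t)` and
`1 - Φ(t) = (1 - t) (sin (π t) - π t cos (π t)) / sin (π t)`, and both numerators are positive by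
the single inequality `x cos x < sin x` on `(0, π)`, applied at `x = π t` and at `x = π - π t`.
-/

open Real

namespace Real

theorem mul_cos_lt_sin {x : ℝ} (hx0 : 0 < x) (hxπ : x < π) : x * cos x < sin x := by
  have hsin : 0 < sin x := sin_pos_of_pos_of_lt_pi hx0 hxπ
  rcases le_or_gt (π / 2) x with hx | hx
  · have hcos : cos x ≤ 0 := cos_nonpos_of_pi_div_two_le_of_le hx (by linarith [pi_pos])
    nlinarith
  · have hcos : 0 < cos x := cos_pos_of_mem_Ioo ⟨by linarith, hx⟩
    have htan := lt_tan hx0 hx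
    rwa [tan_eq_sin_div_cos, lt_div_iff₀ hcos] at htan

theorem neg_pi_sub_mul_cos_lt_sin {x : ℝ} (hx0 : 0 < x) (hxπ : x < π) :
    -((π - x) * cos x) < sin x := by
  have h := mul_cos_lt_sin (x := π - x) (by linarith) (by linarith)
  rwa [cos_pi_sub, sin_pi_sub, mul_neg] at h

end Real

noncomputable def vaalerPhi (t : ℝ) : ℝ :=
  π * t * (1 - |t|) * (cos (π * t) / sin (π * t)) + |t|

theorem vaalerPhi_neg (t : ℝ) : vaalerPhi (-t) = vaalerPhi t := by
  simp only [vaalerPhi, abs_neg, mul_neg, cos_neg, sin_neg, div_neg, neg_mul, neg_neg]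

theorem vaalerPhi_abs (t : ℝ) : vaalerPhi |t| = vaalerPhi t := by
  rcases abs_choice t with ht | ht <;> rw [ht]
  exact vaalerPhi_neg t

theorem vaalerPhi_pos_of_mem_Ioo {t : ℝ} (ht0 : 0 < t) (ht1 : t < 1) : 0 < vaalerPhi t := by
  have hπt : 0 < π * t := mul_pos pi_pos ht0
  have hπt' : π * t < π := by nlinarith [pi_pos]
  have hsin := sin_pos_of_pos_of_lt_pi hπt hπt'
  have hnum := neg_pi_sub_mul_cos_lt_sin hπt hπt'
  have hΦ : vaalerPhi t = t * (sin (π * t) + π * (1 - t) * cos (π * t)) / sin (π * t) := by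
    rw [vaalerPhi, abs_of_pos ht0]
    field_simp
    ring
  rw [hΦ]
  apply div_pos (mul_pos ht0 _) hsin
  nlinarith

theorem vaalerPhi_lt_one_of_mem_Ioo {t : ℝ} (ht0 : 0 < t) (ht1 : t < 1) : vaalerPhi t < 1 := by
  have hπt : 0 < π * t := mul_pos pi_pos ht0
  have hπt' : π * t < π := by nlinarith [pi_pos]
  have hsin := sin_pos_of_pos_of_lt_pi hπt hπt'
  have hnum := mul_cos_lt_sin hπt hπt'
  have hΦ : 1 - vaalerPhi t = (1 - t) * (sin (π * t) - π * t * cos (π * t)) / sin (π * t) := by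
    rw [vaalerPhi, abs_of_pos ht0]
    field_simp
    ring
  have : 0 < 1 - vaalerPhi t := by
    rw [hΦ]
    exact div_pos (mul_pos (by linarith) (by linarith)) hsin
  linarith

/-- For `0 < |t| < 1`, the function `Φ(t) = πt(1−|t|)cot(πt) + |t|` satisfies `0 < Φ(t) < 1`. -/
theorem vaalerPhi_mem_Ioo (t : ℝ) (h0 : 0 < |t|) (h1 : |t| < 1) :
    0 < Real.pi * t * (1 - |t|) * (Real.cos (Real.pi * t) / Real.sin (Real.pi * t)) + |t| ∧
    Real.pi * t * (1 - |t|) * (Real.cos (Real.pi * t) / Real.sin (Real.pi * t)) + |t| < 1 := by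
  rw [← vaalerPhi, ← vaalerPhi_abs]
  exact ⟨vaalerPhi_pos_of_mem_Ioo h0 h1, vaalerPhi_lt_one_of_mem_Ioo h0 h1⟩
end
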